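/- Let T be a semi-complete digraph containing a p-triple (A,B,C) with p sufficiently large relative to k (e.g., p > 4k+1), and let η be an immersion of a digraph H with |H| = k into T minimizing the total sum of lengths of the paths η(E(H)), with all paths simple. Then every path of η(E(H)) uses at most 4 vertices from B. -/

import Mathlib

/-- An immersion of a digraph `H` (arcs `EH` with endpoints `src`, `tgt`) into the
digraph `(V, E)`: an injective map on vertices together with pairwise arc-disjoint
directed paths realizing the arcs. -/
def IsImmersion {V VH EH : Type*} (E : V → V → Prop) (src tgt : EH → VH)
    (ηv : VH → V) (P : EH → List V) : Prop :=
  Function.Injective ηv ∧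
  (∀ e, (P e).Chain' E ∧
    (P e).head? = some (ηv (src e)) ∧ (P e).getLast? = some (ηv (tgt e))) ∧
  (∀ e e', e ≠ e' → ∀ p : V × V,
    p ∈ (P e).zip (P e).tail → p ∉ (P e').zip (P e').tail)

/-- Total sum of lengths (numbers of arcs) of a family of paths. -/
def totalLen {V EH : Type*} [Fintype EH] (P : EH → List V) : ℕ :=
  ∑ e, ((P e).length - 1)

/-!
Routing every arc `x → y` of `H` along `b x → c j → a j → b y`, with a separate index `j` for
each arc, is an immersion of total length `3 |E(H)|`. Hence a minimal immersion has at most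
`4 |E(H)| < p` vertices on its paths, so some `a j`, `c j` lie on none of them. If a path met
`B` in five vertices, at least three vertices would lie strictly between the first and the last of
them; replacing that segment by `c j → a j` gives a shorter immersion.
-/

namespace List

variable {α : Type*}

theorem mem_consecutivePairs_cons_cons {x y : α} {l : List α} {q : α × α} :
    q ∈ (x :: y :: l).consecutivePairs ↔ q = (x, y) ∨ q ∈ (y :: l).consecutivePairs := by
  simp [consecutivePairs]

theorem mem_of_mem_consecutivePairs {l : List α} {q : α × α} (h : q ∈ l.consecutivePairs) :
    q.1 ∈ l ∧ q.2 ∈ l :=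
  ⟨(of_mem_zip h).1, mem_of_mem_tail (of_mem_zip h).2⟩

theorem mem_consecutivePairs_append {l₁ l₂ : List α} {q : α × α} :
    q ∈ (l₁ ++ l₂).consecutivePairs ↔ q ∈ l₁.consecutivePairs ∨ q ∈ l₂.consecutivePairs ∨
      (l₁.getLast? = some q.1 ∧ l₂.head? = some q.2) := by
  induction l₁ with
  | nil => simp [consecutivePairs]
  | cons x t ih =>
    cases t with
    | nil =>
      cases l₂ with
      | nil => simp [consecutivePairs]
      | cons y l₂ =>
        rw [singleton_append, mem_consecutivePairs_cons_cons]
        simp [consecutivePairs, Prod.ext_iff, eq_comm, or_comm]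
    | cons y t =>
      simp only [cons_append, mem_consecutivePairs_cons_cons] at ih ⊢
      rw [ih, getLast?_cons_cons]
      tauto

theorem mem_consecutivePairs_splice {L M N R : List α} {u w : α} (hN : N ≠ []) {q : α × α}
    (h : q ∈ (L ++ u :: N ++ w :: R).consecutivePairs) :
    q ∈ (L ++ u :: M ++ w :: R).consecutivePairs ∨ q.1 ∈ N ∨ q.2 ∈ N := by
  obtain ⟨x, N, rfl⟩ := exists_cons_of_ne_nil hN
  simp only [mem_consecutivePairs_append, mem_consecutivePairs_cons_cons] at h ⊢
  rcases h with (hL | (rfl | hxN) | hLu) | hR | ⟨hlast, -⟩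
  · exact .inl (.inl (.inl hL))
  · exact .inr (.inr (mem_cons_self ..))
  · exact .inr (.inl (mem_of_mem_consecutivePairs hxN).1)
  · exact .inl (.inl (.inr (.inr hLu)))
  · exact .inl (.inr (.inl hR))
  · rw [getLast?_append_cons, getLast?_cons, Option.some_inj] at hlast
    exact .inr (.inl (hlast ▸ getLast_mem _))

theorem IsChain.splice {r : α → α → Prop} {L M N R : List α} {u w : α}
    (hl : IsChain r (L ++ u :: M ++ w :: R)) (hN : IsChain r (u :: N ++ [w])) :
    IsChain r (L ++ u :: N ++ w :: R) := by
  have hLu : IsChain r (L ++ [u]) := (isChain_split.1 hl.left_of_append).1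
  have hwR : IsChain r ([w] ++ R) := hl.right_of_append
  have huN : IsChain r ([u] ++ (N ++ w :: R)) := by
    simpa using hN.append_overlap hwR (cons_ne_nil w [])
  simpa using hLu.append_overlap huN (cons_ne_nil u [])

theorem exists_eq_append_cons_of_lt_card {s : Finset α} {l : List α} (hs : ∀ x ∈ s, x ∈ l)
    {n : ℕ} (hn : n < s.card) : ∃ M w R, w ∈ s ∧ l = M ++ w :: R ∧ n ≤ M.length := by
  classical
  obtain ⟨w, hws, hwn⟩ : ∃ w ∈ s, w ∉ l.take n := by
    by_contra! h
    have hsub : s ⊆ (l.take n).toFinset := fun x hx => mem_toFinset.2 (h x hx)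
    have := (Finset.card_le_card hsub).trans <|
      (l.take n).toFinset_card_le.trans (length_take_le n l)
    omega
  have hwd : w ∈ l.drop n := by
    have := hs w hws
    rw [← take_append_drop n l, mem_append] at this
    exact this.resolve_left hwn
  obtain ⟨M', R, hMR⟩ := append_of_mem hwd
  refine ⟨l.take n ++ M', w, R, hws, ?_, ?_⟩
  · rw [append_assoc, ← hMR, take_append_drop]
  · have := length_pos_of_mem hwd
    rw [length_drop] at this
    rw [length_append, length_take]
    omega

theorem exists_eq_append_cons_append_cons_of_lt_card {s : Finset α} {l : List α}
    (hs : ∀ x ∈ s, x ∈ l) {n : ℕ} (hn : n + 1 < s.card) :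
    ∃ L u M w R, u ∈ s ∧ w ∈ s ∧ l = L ++ u :: M ++ w :: R ∧ n ≤ M.length := by
  classical
  induction l with
  | nil =>
    rw [Finset.eq_empty_of_forall_notMem fun x hx => not_mem_nil (hs x hx)] at hn
    exact absurd hn (by simp)
  | cons x t ih =>
    by_cases hx : x ∈ s
    · have hst : ∀ y ∈ s.erase x, y ∈ t := fun y hy =>
        (mem_cons.1 (hs y (Finset.mem_of_mem_erase hy))).resolve_left (Finset.ne_of_mem_erase hy)
      obtain ⟨M, w, R, hw, rfl, hM⟩ := exists_eq_append_cons_of_lt_card hst (n := n)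
        (by rw [Finset.card_erase_of_mem hx]; omega)
      exact ⟨[], x, M, w, R, hx, Finset.mem_of_mem_erase hw, rfl, hM⟩
    · obtain ⟨L, u, M, w, R, hu, hw, rfl, hM⟩ :=
        ih fun y hy => (mem_cons.1 (hs y hy)).resolve_left (fun h => hx (h ▸ hy))
      exact ⟨x :: L, u, M, w, R, hu, hw, rfl, hM⟩

end List

open Function

section Immersion

variable {V VH EH : Type*} {E : V → V → Prop} {src tgt : EH → VH} {ηv : VH → V}
  {P : EH → List V}

theorem IsImmersion.ne_nil (h : IsImmersion E src tgt ηv P) (e : EH) : P e ≠ [] := by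
  intro he
  simpa [he] using (h.2.1 e).2.1

theorem IsImmersion.update [DecidableEq EH] (h : IsImmersion E src tgt ηv P) (e : EH)
    {Q : List V} (hQ : Q.IsChain E) (hhead : Q.head? = (P e).head?)
    (hlast : Q.getLast? = (P e).getLast?)
    (harcs : ∀ q ∈ Q.consecutivePairs,
      q ∈ (P e).consecutivePairs ∨ ∀ e' ≠ e, q ∉ (P e').consecutivePairs) :
    IsImmersion E src tgt ηv (Function.update P e Q) := by
  obtain ⟨hinj, hpath, hdisj⟩ := h
  refine ⟨hinj, fun e' => ?_, fun e₁ e₂ hne q hq₁ hq₂ => ?_⟩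
  · rcases eq_or_ne e' e with rfl | he'
    · rw [update_self, hhead, hlast]
      exact ⟨hQ, (hpath e').2⟩
    · rw [update_of_ne he']
      exact hpath e'
  · by_cases he₁ : e₁ = e
    · subst he₁
      rw [update_self] at hq₁
      rw [update_of_ne hne.symm] at hq₂
      exact (harcs q hq₁).elim (hdisj _ _ hne q · hq₂) (· e₂ hne.symm hq₂)
    by_cases he₂ : e₂ = e
    · subst he₂
      rw [update_of_ne hne] at hq₁
      rw [update_self] at hq₂
      exact (harcs q hq₂).elim (hdisj _ _ hne q hq₁) (· e₁ hne hq₁)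
    rw [update_of_ne he₁] at hq₁
    rw [update_of_ne he₂] at hq₂
    exact hdisj _ _ hne q hq₁ hq₂

theorem IsImmersion.splice [DecidableEq EH] (h : IsImmersion E src tgt ηv P) {e : EH}
    {L M N R : List V} {u w : V} (hPe : P e = L ++ u :: M ++ w :: R) (hN : N ≠ [])
    (hchain : (u :: N ++ [w]).IsChain E) (hfresh : ∀ x ∈ N, ∀ e' ≠ e, x ∉ P e') :
    IsImmersion E src tgt ηv (Function.update P e (L ++ u :: N ++ w :: R)) := by
  have hPe_chain : (P e).IsChain E := (h.2.1 e).1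
  rw [hPe] at hPe_chain
  refine h.update e (hPe_chain.splice hchain) (by cases L <;> simp [hPe])
    (by rw [hPe, List.getLast?_append_cons, List.getLast?_append_cons]) fun q hq => ?_
  rcases List.mem_consecutivePairs_splice hN hq with hq | hq | hq
  · exact .inl (hPe ▸ hq)
  · exact .inr fun e' he' hq' => hfresh _ hq e' he' (List.mem_of_mem_consecutivePairs hq').1
  · exact .inr fun e' he' hq' => hfresh _ hq e' he' (List.mem_of_mem_consecutivePairs hq').2

theorem sum_length_eq_totalLen_add_card [Fintype EH] (hP : ∀ e, P e ≠ []) :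
    ∑ e, (P e).length = totalLen P + Fintype.card EH := by
  rw [totalLen, Fintype.card_eq_sum_ones, ← Finset.sum_add_distrib]
  refine Finset.sum_congr rfl fun e _ => ?_
  have := List.length_pos_iff.2 (hP e)
  omega

theorem totalLen_update_lt [Fintype EH] [DecidableEq EH] {e : EH} {Q : List V} (hQ : Q ≠ [])
    (hlt : Q.length < (P e).length) : totalLen (update P e Q) < totalLen P := by
  have := List.length_pos_iff.2 hQ
  refine Finset.sum_lt_sum (fun e' _ => ?_) ⟨e, Finset.mem_univ e, ?_⟩
  · rcases eq_or_ne e' e with rfl | he'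
    · rw [update_self]
      omega
    · rw [update_of_ne he']
  · rw [update_self]
    omega

end Immersion

structure IsTriple {ι V : Type*} (E : V → V → Prop) (a b c : ι → V) : Prop where
  injective_a : Injective a
  injective_b : Injective b
  injective_c : Injective c
  disjoint_ab : Disjoint (Set.range a) (Set.range b)
  disjoint_bc : Disjoint (Set.range b) (Set.range c)
  disjoint_ac : Disjoint (Set.range a) (Set.range c)
  rel_ab : ∀ i j, E (a i) (b j)
  rel_bc : ∀ i j, E (b i) (c j)
  rel_ca : ∀ i, E (c i) (a i)

namespace IsTriple

variable {ι V : Type*} {E : V → V → Prop} {a b c : ι → V}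

theorem exists_isImmersion_totalLen_eq [Fintype ι] (hT : IsTriple E a b c) {VH EH : Type*}
    [Fintype VH] [Fintype EH] (src tgt : EH → VH) (hVH : Fintype.card VH ≤ Fintype.card ι)
    (hEH : Fintype.card EH ≤ Fintype.card ι) :
    ∃ ηv P, IsImmersion E src tgt ηv P ∧ totalLen P = 3 * Fintype.card EH := by
  obtain ⟨f⟩ := Embedding.nonempty_of_card_le hVH
  obtain ⟨g⟩ := Embedding.nonempty_of_card_le hEH
  refine ⟨b ∘ f, fun e => [b (f (src e)), c (g e), a (g e), b (f (tgt e))], ⟨?_, ?_, ?_⟩, ?_⟩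
  · exact hT.injective_b.comp f.injective
  · exact fun e => ⟨.cons_cons (hT.rel_bc _ _) (.cons_cons (hT.rel_ca _)
      (.cons_cons (hT.rel_ab _ _) (.singleton _))), rfl, rfl⟩
  · intro e e' hne q hq hq'
    have hab := Set.disjoint_range_iff.1 hT.disjoint_ab
    have hbc := Set.disjoint_range_iff.1 hT.disjoint_bc
    have hac := Set.disjoint_range_iff.1 hT.disjoint_ac
    simp only [List.tail_cons, List.zip_cons_cons, List.zip_nil_right,
      List.mem_cons, List.not_mem_nil, or_false] at hq hq'
    rcases hq with rfl | rfl | rfl <;>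
      simp [Prod.ext_iff, hT.injective_a.eq_iff, hT.injective_c.eq_iff, g.injective.eq_iff,
        hne, hab, hbc, hac, fun i j => (hab i j).symm, fun i j => (hbc i j).symm,
        fun i j => (hac i j).symm] at hq'
  · simp [totalLen, mul_comm]

theorem exists_apply_notMem [Fintype ι] [DecidableEq V] (hT : IsTriple E a b c) (X : Finset V)
    (hX : X.card < Fintype.card ι) : ∃ j, a j ∉ X ∧ c j ∉ X := by
  by_contra! h
  have hmaps : Set.MapsTo (fun j => if a j ∈ X then a j else c j) (Finset.univ : Finset ι) X := by
    intro j _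
    by_cases hj : a j ∈ X <;> simp [hj, h j]
  have hinj : Set.InjOn (fun j => if a j ∈ X then a j else c j) (Finset.univ : Finset ι) := by
    intro i _ j _ hij
    have hac := Set.disjoint_range_iff.1 hT.disjoint_ac
    by_cases hi : a i ∈ X <;> by_cases hj : a j ∈ X <;> simp only [hi, hj, if_true, if_false] at hij
    · exact hT.injective_a hij
    · exact absurd hij (hac i j)
    · exact absurd hij.symm (hac j i)
    · exact hT.injective_c hij
  have := Finset.card_le_card_of_injOn _ hmaps hinj
  rw [Finset.card_univ] at this
  omega

end IsTriple

theorem stmt_14_general {V : Type*} [DecidableEq V] (E : V → V → Prop)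
    (k p : ℕ) (hp : 4 * k + 1 < p)
    (a b c : Fin p → V)
    (hainj : Function.Injective a) (hbinj : Function.Injective b)
    (hcinj : Function.Injective c)
    (hAB : Disjoint (Set.range a) (Set.range b))
    (hBC : Disjoint (Set.range b) (Set.range c))
    (hAC : Disjoint (Set.range a) (Set.range c))
    (hab : ∀ i j : Fin p, E (a i) (b j))
    (hbc : ∀ i j : Fin p, E (b i) (c j))
    (hca : ∀ i : Fin p, E (c i) (a i))
    {VH EH : Type*} [Fintype VH] [Fintype EH] (src tgt : EH → VH)
    (hk : Fintype.card VH + Fintype.card EH = k)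
    (ηv : VH → V) (P : EH → List V)
    (himm : IsImmersion E src tgt ηv P)
    (hmin : ∀ (ηv' : VH → V) (P' : EH → List V),
      IsImmersion E src tgt ηv' P' → totalLen P ≤ totalLen P') :
    ∀ e : EH,
      (Finset.univ.filter (fun i : Fin p => b i ∈ P e)).card ≤ 4 := by
  classical
  intro e
  by_contra! hB
  have hT : IsTriple E a b c := ⟨hainj, hbinj, hcinj, hAB, hBC, hAC, hab, hbc, hca⟩
  obtain ⟨ηv₀, P₀, himm₀, hlen₀⟩ :=
    hT.exists_isImmersion_totalLen_eq src tgt (by rw [Fintype.card_fin]; omega)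
      (by rw [Fintype.card_fin]; omega)
  have hsum : ∑ e, (P e).length < p := by
    have := hmin ηv₀ P₀ himm₀
    rw [sum_length_eq_totalLen_add_card himm.ne_nil]
    omega
  obtain ⟨j, haj, hcj⟩ := hT.exists_apply_notMem (Finset.univ.biUnion fun e => (P e).toFinset)
    (Finset.card_biUnion_le.trans_lt <| (Finset.sum_le_sum fun e _ =>
      (P e).toFinset_card_le).trans_lt (by rwa [Fintype.card_fin]))
  obtain ⟨L, u, M, w, R, hu, hw, hPe, hM⟩ :=
    List.exists_eq_append_cons_append_cons_of_lt_card
      (s := (Finset.univ.filter fun i => b i ∈ P e).image b) (l := P e) (n := 3) (by simp)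
      (by rw [Finset.card_image_of_injective _ hbinj]; omega)
  obtain ⟨i, -, rfl⟩ := Finset.mem_image.1 hu
  obtain ⟨i', -, rfl⟩ := Finset.mem_image.1 hw
  have hfresh : ∀ x ∈ [c j, a j], ∀ e', x ∉ P e' := by simp_all
  have himm' := himm.splice hPe (N := [c j, a j]) (List.cons_ne_nil _ _)
    (.cons_cons (hbc i j) (.cons_cons (hca j) (.cons_cons (hab j i') (.singleton _))))
    fun x hx e' _ => hfresh x hx e'
  refine (hmin ηv _ himm').not_gt (totalLen_update_lt (by simp) ?_)
  rw [hPe]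
  simp only [List.length_append, List.length_cons, List.length_nil]
  omega

/-- If a semi-complete digraph `T` contains a `p`-triple `(A,B,C)` with
`p > 4k + 1`, and `η` is an immersion of a digraph `H` with `|H| = k` into `T`
minimizing the total sum of lengths of its (simple) paths, then every path of the
immersion uses at most 4 vertices from `B`. -/
theorem stmt_14 {V : Type*} [Fintype V] [DecidableEq V] (E : V → V → Prop)
    (hirr : ∀ v, ¬ E v v)
    (hsc : ∀ u v : V, u ≠ v → E u v ∨ E v u)
    (k p : ℕ) (hp : 4 * k + 1 < p)
    (a b c : Fin p → V)
    (hainj : Function.Injective a) (hbinj : Function.Injective b)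
    (hcinj : Function.Injective c)
    (hAB : Disjoint (Set.range a) (Set.range b))
    (hBC : Disjoint (Set.range b) (Set.range c))
    (hAC : Disjoint (Set.range a) (Set.range c))
    (hab : ∀ i j : Fin p, E (a i) (b j))
    (hbc : ∀ i j : Fin p, E (b i) (c j))
    (hca : ∀ i : Fin p, E (c i) (a i))
    {VH EH : Type*} [Fintype VH] [Fintype EH] (src tgt : EH → VH)
    (hk : Fintype.card VH + Fintype.card EH = k)
    (ηv : VH → V) (P : EH → List V)
    (himm : IsImmersion E src tgt ηv P)
    (hsimple : ∀ e, (P e).Nodup)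
    (hmin : ∀ (ηv' : VH → V) (P' : EH → List V),
      IsImmersion E src tgt ηv' P' → totalLen P ≤ totalLen P') :
    ∀ e : EH,
      (Finset.univ.filter (fun i : Fin p => b i ∈ P e)).card ≤ 4 :=
  stmt_14_general E k p hp a b c hainj hbinj hcinj hAB hBC hAC hab hbc hca src tgt hk ηv P himm hmin
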